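/- Define R₁ = p₂² - (p₁-p₂)q₂ and R₂ = p₁² - p₁p₂ - q₁ in ℂ[p₁,p₂,q₁,q₂]. With the Poisson bracket {f,g} = -Σᵢ qᵢ(∂f/∂pᵢ ∂g/∂qᵢ - ∂g/∂pᵢ ∂f/∂qᵢ), one has {R₁,R₂} = q₂·R₂; in particular {R₁,R₂} lies in the ideal ⟨R₁,R₂⟩ but is nonzero. -/
import Mathlib


open MvPolynomial

namespace Stmt11

/-- Variables: p₁ = X 0, p₂ = X 1, q₁ = X 2, q₂ = X 3. -/
noncomputable def poisson (f g : MvPolynomial (Fin 4) ℂ) : MvPolynomial (Fin 4) ℂ :=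
  -(X 2 * (pderiv 0 f * pderiv 2 g - pderiv 0 g * pderiv 2 f)
    + X 3 * (pderiv 1 f * pderiv 3 g - pderiv 1 g * pderiv 3 f))

noncomputable def R₁ : MvPolynomial (Fin 4) ℂ := (X 1) ^ 2 - (X 0 - X 1) * X 3
noncomputable def R₂ : MvPolynomial (Fin 4) ℂ := (X 0) ^ 2 - X 0 * X 1 - X 2

lemma key : poisson R₁ R₂ = X 3 * R₂ := by
  have h0 : ∀ i j : Fin 4, i ≠ j → pderiv i (X j : MvPolynomial (Fin 4) ℂ) = 0 :=
    fun i j h => pderiv_X_of_ne h.symm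
  simp only [poisson, R₁, R₂, map_sub, Derivation.leibniz, pderiv_pow, pderiv_X_self,
    h0 0 1 (by decide), h0 0 3 (by decide), h0 2 0 (by decide), h0 2 1 (by decide),
    h0 2 3 (by decide), h0 1 0 (by decide), h0 1 3 (by decide), h0 3 0 (by decide),
    h0 3 1 (by decide), h0 3 2 (by decide), h0 0 2 (by decide), h0 1 2 (by decide),
    smul_eq_mul]
  ring

/-- For the Hirzebruch surface Σ₁: {R₁,R₂} = q₂·R₂, so the bracket lies in the
ideal ⟨R₁,R₂⟩ but is nonzero. -/
theorem stmt_11 :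
    poisson R₁ R₂ = X 3 * R₂ ∧
    poisson R₁ R₂ ∈ Ideal.span {R₁, R₂} ∧
    poisson R₁ R₂ ≠ 0 := by
  refine ⟨key, ?_, ?_⟩
  · rw [key]
    exact Ideal.mul_mem_left _ _ (Ideal.subset_span (by simp))
  · rw [key]
    intro h
    have := congrArg (eval fun i : Fin 4 => if i = 0 then 1 else if i = 3 then 1 else 0) h
    simp [R₂] at this

end Stmt11
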